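/- For t, s, r ∈ [0,1] and ζ ∉ Spec(𝒩_t + V_t) ∪ Spec(𝒩_s + V_s), the resolvents R_t(ζ) := (𝒩_t + V_t − ζ)⁻¹ satisfy R_t(ζ) − R_s(ζ) = R_t(ζ)(V_s − V_t)R_s(ζ) + τ (T_r R_t(ζ̄))* 𝒥 T_r R_s(ζ), and moreover R_t(ζ) − R_s(ζ) = R_t(ζ)(V_s − V_t)R_s(ζ) + τ (T_t R_t(ζ̄))* (((P_t − P_s)J) ⊕ (−(Q_t − Q_s)J)) T_s R_s(ζ) + τ (T_t R_t(ζ̄))* 𝒥 (T_t − T_s) R_s(ζ). -/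

import Mathlib

/-!
Pair both sides with `y ∈ H²`. Since `𝒜_t` and `ℬ_t` are self-adjoint, Green's identity for
`𝒩_t + V_t` has no boundary terms on `dom 𝒩_t`; this produces `R_t(ζ̄)` (bounded into `H₊²`
by the graph norm) and the duality `⟨R_t(ζ) x, y⟩ = ⟨x, τ R_t(ζ̄) τ y⟩`. Green's identity
applied once more to `R_s(ζ) x`, which lies in `H₊²` but not in `dom 𝒩_t`, and to
`R_t(ζ̄) τ y` leaves exactly the boundary term `Ω(T_r R_s(ζ) x, T_r R_t(ζ̄) τ y)`, for any
trace operator `T_r`: this is the first formula. For the second, split `T_t = T_s + (T_t - T_s)`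
and note that on `ran P_s × ran P_t` the form `ω` is represented by `(P_t - P_s) J`.
-/

noncomputable section

open Function Set

namespace CSO

local notation "⟪" x ", " y "⟫" => (inner ℂ x y : ℂ)

/-- The ℓ²-direct sum `E ⊕ E`. -/
abbrev Sq (E : Type*) : Type _ := WithLp 2 (E × E)

section Pieces

variable {E F E' F' : Type*}
  [NormedAddCommGroup E] [InnerProductSpace ℂ E]
  [NormedAddCommGroup F] [InnerProductSpace ℂ F]
  [NormedAddCommGroup E'] [InnerProductSpace ℂ E']
  [NormedAddCommGroup F'] [InnerProductSpace ℂ F']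

/-- Pairing map into the ℓ²-direct sum. -/
def mk2 (x y : E) : Sq E := (WithLp.equiv 2 (E × E)).symm (x, y)

/-- First component. -/
def c1 (u : Sq E) : E := (WithLp.equiv 2 (E × E) u).1

/-- Second component. -/
def c2 (u : Sq E) : E := (WithLp.equiv 2 (E × E) u).2

/-- Transport of a product of continuous linear maps to the ℓ²-products. -/
def pm (A : E →L[ℂ] E') (B : F →L[ℂ] F') :
    WithLp 2 (E × F) →L[ℂ] WithLp 2 (E' × F') :=
  (((WithLp.prodContinuousLinearEquiv 2 ℂ E' F').symm :
      (E' × F') →L[ℂ] WithLp 2 (E' × F')).comp (A.prodMap B)).comp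
    ((WithLp.prodContinuousLinearEquiv 2 ℂ E F :
      WithLp 2 (E × F) ≃L[ℂ] (E × F)) : WithLp 2 (E × F) →L[ℂ] E × F)

/-- The continuous linear map `x ↦ (A x, B x)` into an ℓ²-direct sum. -/
def mk2L (A B : E →L[ℂ] F) : E →L[ℂ] Sq F :=
  (((WithLp.prodContinuousLinearEquiv 2 ℂ F F).symm :
      (F × F) →L[ℂ] Sq F)).comp (A.prod B)

/-- First component as a continuous linear map. -/
def c1L : Sq E →L[ℂ] E :=
  (ContinuousLinearMap.fst ℂ E E).comp
    ((WithLp.prodContinuousLinearEquiv 2 ℂ E E :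
      Sq E ≃L[ℂ] (E × E)) : Sq E →L[ℂ] E × E)

/-- Second component as a continuous linear map. -/
def c2L : Sq E →L[ℂ] E :=
  (ContinuousLinearMap.snd ℂ E E).comp
    ((WithLp.prodContinuousLinearEquiv 2 ℂ E E :
      Sq E ≃L[ℂ] (E × E)) : Sq E →L[ℂ] E × E)

/-- The involution `τ (u₁, u₂) = (u₂, u₁)`. -/
def swapL (E : Type*) [NormedAddCommGroup E] [InnerProductSpace ℂ E] :
    Sq E →L[ℂ] Sq E := mk2L c2L c1L

/-- The standard symplectic matrix `J (f₁, f₂) = (f₂, -f₁)`. -/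
def Jm (E : Type*) [NormedAddCommGroup E] [InnerProductSpace ℂ E] :
    Sq E →L[ℂ] Sq E := mk2L c2L (-c1L)

/-- The symplectic matrix `𝒥 = J ⊕ (-J)` on `𝔥⁴`. -/
def calJ (E : Type*) [NormedAddCommGroup E] [InnerProductSpace ℂ E] :
    Sq (Sq E) →L[ℂ] Sq (Sq E) := pm (Jm E) (-(Jm E))

/-- The symplectic form `ω(f, g) = ⟨f₂, g₁⟩ - ⟨f₁, g₂⟩` on `𝔥²`. -/
def om (f g : Sq E) : ℂ := ⟪c2 f, c1 g⟫ - ⟪c1 f, c2 g⟫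

/-- The symplectic form
`Ω(f, g) = ⟨f₂,g₁⟩ - ⟨f₁,g₂⟩ - ⟨f₄,g₃⟩ + ⟨f₃,g₄⟩` on `𝔥⁴`. -/
def Om (f g : Sq (Sq E)) : ℂ := om (c1 f) (c1 g) - om (c2 f) (c2 g)

/-- Orthogonal projection predicate. -/
def IsOrthProj [CompleteSpace E] (P : E →L[ℂ] E) : Prop :=
  P.comp P = P ∧ IsSelfAdjoint P

/-- The range of `P` is a Lagrangian subspace of `(𝔥², ω)`. -/
def IsLagrangianRange (P : Sq E →L[ℂ] Sq E) : Prop :=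
  ∀ f, f ∈ Set.range P ↔ ∀ g ∈ Set.range P, om f g = 0

end Pieces

/-- The core data: a closed densely defined symmetric operator `A` with equal finite
deficiency indices `dim 𝔥`, whose adjoint `A*` has domain the Hilbert space `Hp = H₊`
(with the graph inner product), realized through the embedding `e : H₊ → H` and the
bounded operator `As = A* : H₊ → H`. -/
structure Core (H 𝔥 Hp : Type*) [NormedAddCommGroup H] [InnerProductSpace ℂ H]
    [NormedAddCommGroup 𝔥] [InnerProductSpace ℂ 𝔥]
    [NormedAddCommGroup Hp] [InnerProductSpace ℂ Hp] where
  e : Hp →L[ℂ] H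
  As : Hp →L[ℂ] H
  e_inj : Function.Injective e
  graph_inner : ∀ u v : Hp, ⟪u, v⟫ = ⟪e u, e v⟫ + ⟪As u, As v⟫
  domA : Submodule ℂ Hp
  dense_dom : Dense (e '' (domA : Set Hp))
  adjoint_iff : ∀ v w : H,
      (∃ p : Hp, e p = v ∧ As p = w) ↔ ∀ u ∈ domA, ⟪As u, v⟫ = ⟪e u, w⟫
  closed_graph : IsClosed {q : H × H | ∃ p ∈ domA, e p = q.1 ∧ As p = q.2}
  defect_m : Module.finrank ℂ
      (LinearMap.ker (As.toLinearMap - Complex.I • e.toLinearMap)) = Module.finrank ℂ 𝔥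
  defect_p : Module.finrank ℂ
      (LinearMap.ker (As.toLinearMap + Complex.I • e.toLinearMap)) = Module.finrank ℂ 𝔥

variable {H 𝔥 Hp : Type*}
  [NormedAddCommGroup H] [InnerProductSpace ℂ H]
  [NormedAddCommGroup 𝔥] [InnerProductSpace ℂ 𝔥]
  [NormedAddCommGroup Hp] [InnerProductSpace ℂ Hp]

/-- The embedding `H₊² → H²`. -/
def Core.emb2 (C : Core H 𝔥 Hp) : Sq Hp →L[ℂ] Sq H := pm C.e C.e

/-- The action `(u₁,u₂) ↦ (-A* u₂, A* u₁)` (the common formula for `N` and its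
extensions `𝒩`). -/
def Core.Nmax (C : Core H 𝔥 Hp) : Sq Hp →L[ℂ] Sq H :=
  mk2L ((-C.As).comp c2L) (C.As.comp c1L)

/-- The action of `N* : (u₁,u₂) ↦ (A* u₂, -A* u₁)`. -/
def Core.NstarOp (C : Core H 𝔥 Hp) : Sq Hp →L[ℂ] Sq H := -C.Nmax

/-- The action of `(τN)* : (u₁,u₂) ↦ (A* u₁, -A* u₂)`. -/
def Core.tauNstarOp (C : Core H 𝔥 Hp) : Sq Hp →L[ℂ] Sq H :=
  mk2L (C.As.comp c1L) ((-C.As).comp c2L)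

/-- Trace operator (boundary triplet map) for `A*`: bounded, surjective, and
satisfying the abstract Green identity. -/
structure IsTrace (C : Core H 𝔥 Hp) (tr : Hp →L[ℂ] Sq 𝔥) : Prop where
  surj : Function.Surjective tr
  green : ∀ u v : Hp, ⟪C.As u, C.e v⟫ - ⟪C.e u, C.As v⟫ = om (tr u) (tr v)

/-- The doubled trace operator `T = tr ⊕ tr : H₊² → 𝔥⁴`. -/
def Top (tr : Hp →L[ℂ] Sq 𝔥) : Sq Hp →L[ℂ] Sq (Sq 𝔥) := pm tr tr

/-- `dom ⊆ H₊` is the domain of a self-adjoint extension of `A` (the extension being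
the restriction of `A*` to `dom`). -/
structure IsSAExt (C : Core H 𝔥 Hp) (dom : Submodule ℂ Hp) : Prop where
  le : C.domA ≤ dom
  sa : ∀ v w : H,
      (∃ p ∈ dom, C.e p = v ∧ C.As p = w) ↔ ∀ u ∈ dom, ⟪C.As u, v⟫ = ⟪C.e u, w⟫

/-- The bounded potential `V(u,v) = (-G v, F u)` on `H²`. -/
def Vop [CompleteSpace H] (F G : H →L[ℂ] H) : Sq H →L[ℂ] Sq H :=
  mk2L ((-G).comp c2L) (F.comp c1L)

/-- The adjoint potential `V*(u,v) = (F v, -G u)` on `H²`. -/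
def VopStar [CompleteSpace H] (F G : H →L[ℂ] H) : Sq H →L[ℂ] Sq H :=
  mk2L (F.comp c2L) ((-G).comp c1L)

/-- `p ∈ dom(𝒜) × dom(ℬ)` and `(𝒩 + V - ζ) p = x`. -/
def ResSol (C : Core H 𝔥 Hp) [CompleteSpace H] (dU dV : Submodule ℂ Hp)
    (V : Sq H →L[ℂ] Sq H) (ζ : ℂ) (p : Sq Hp) (x : Sq H) : Prop :=
  c1 p ∈ dU ∧ c2 p ∈ dV ∧ C.Nmax p + V (C.emb2 p) - ζ • C.emb2 p = x

/-- `R = (𝒩 + V - ζ)⁻¹`, viewed as a bounded operator from `H²` to `H₊²`. -/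
def IsResS (C : Core H 𝔥 Hp) [CompleteSpace H] (dU dV : Submodule ℂ Hp)
    (V : Sq H →L[ℂ] Sq H) (ζ : ℂ) (R : Sq H →L[ℂ] Sq Hp) : Prop :=
  (∀ x, ResSol C dU dV V ζ (R x) x) ∧ ∀ p x, ResSol C dU dV V ζ p x → R x = p

/-- `R = (𝒩 + V - ζ)⁻¹ ∈ B(H²)`. -/
def IsResW (C : Core H 𝔥 Hp) [CompleteSpace H] (dU dV : Submodule ℂ Hp)
    (V : Sq H →L[ℂ] Sq H) (ζ : ℂ) (R : Sq H →L[ℂ] Sq H) : Prop :=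
  (∀ x, ∃ p, ResSol C dU dV V ζ p x ∧ C.emb2 p = R x) ∧
    ∀ p x, ResSol C dU dV V ζ p x → R x = C.emb2 p

/-- The spectrum of `𝒩 + V` (complement of the resolvent set). -/
def specSet (C : Core H 𝔥 Hp) [CompleteSpace H] (dU dV : Submodule ℂ Hp)
    (V : Sq H →L[ℂ] Sq H) : Set ℂ :=
  {ζ | ¬ ∃ R : Sq H →L[ℂ] Sq Hp, IsResS C dU dV V ζ R}

/-- The resolvent `(𝒩 + V - ζ)⁻¹ : H² → H₊²` (defined by choice; `0` off the
resolvent set). -/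
def resolventS (C : Core H 𝔥 Hp) [CompleteSpace H] (dU dV : Submodule ℂ Hp)
    (V : Sq H →L[ℂ] Sq H) (ζ : ℂ) : Sq H →L[ℂ] Sq Hp :=
  open Classical in
  if h : ∃ R, IsResS C dU dV V ζ R then h.choose else 0

/-- The resolvent `(𝒩 + V - ζ)⁻¹ ∈ B(H²)`. -/
def resolventW (C : Core H 𝔥 Hp) [CompleteSpace H] (dU dV : Submodule ℂ Hp)
    (V : Sq H →L[ℂ] Sq H) (ζ : ℂ) : Sq H →L[ℂ] Sq H :=
  C.emb2.comp (resolventS C dU dV V ζ)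

/-- `ζ` is an eigenvalue of `𝒩 + V`. -/
def IsEig (C : Core H 𝔥 Hp) [CompleteSpace H] (dU dV : Submodule ℂ Hp)
    (V : Sq H →L[ℂ] Sq H) (ζ : ℂ) : Prop :=
  ∃ p : Sq Hp, p ≠ 0 ∧ c1 p ∈ dU ∧ c2 p ∈ dV ∧
    C.Nmax p + V (C.emb2 p) = ζ • C.emb2 p

/-- The one-parameter families of Hypothesis 3.1: trace operators, orthogonal
projections with Lagrangian ranges, self-adjoint extensions compatible with the
projections, and bounded self-adjoint perturbations. -/
structure IsFamily [CompleteSpace H] [CompleteSpace Hp] [FiniteDimensional ℂ 𝔥]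
    (C : Core H 𝔥 Hp)
    (tr : ℝ → Hp →L[ℂ] Sq 𝔥) (P Q : ℝ → Sq 𝔥 →L[ℂ] Sq 𝔥)
    (dU dV : ℝ → Submodule ℂ Hp) (F G : ℝ → H →L[ℂ] H) : Prop where
  htr : ∀ t ∈ Icc (0:ℝ) 1, IsTrace C (tr t)
  hP : ∀ t ∈ Icc (0:ℝ) 1, IsOrthProj (P t) ∧ IsLagrangianRange (P t)
  hQ : ∀ t ∈ Icc (0:ℝ) 1, IsOrthProj (Q t) ∧ IsLagrangianRange (Q t)
  hU : ∀ t ∈ Icc (0:ℝ) 1, IsSAExt C (dU t)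
  hV : ∀ t ∈ Icc (0:ℝ) 1, IsSAExt C (dV t)
  htrU : ∀ t ∈ Icc (0:ℝ) 1, tr t '' ((dU t : Set Hp)) = Set.range (P t)
  htrV : ∀ t ∈ Icc (0:ℝ) 1, tr t '' ((dV t : Set Hp)) = Set.range (Q t)
  hF : ∀ t ∈ Icc (0:ℝ) 1, IsSelfAdjoint (F t)
  hG : ∀ t ∈ Icc (0:ℝ) 1, IsSelfAdjoint (G t)

/-- Hypothesis 3.3: there is a point `z` in the resolvent set of `𝒩_t + V_t`
for all `t` near `t₀`. -/
def HypZ [CompleteSpace H] (C : Core H 𝔥 Hp) (dU dV : ℝ → Submodule ℂ Hp)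
    (F G : ℝ → H →L[ℂ] H) (t₀ : ℝ) (z : ℂ) : Prop :=
  ∃ δ > 0, ∀ t : ℝ, |t - t₀| < δ →
    ∃ R, IsResS C (dU t) (dV t) (Vop (F t) (G t)) z R

section Components

variable {E : Type*}

@[simp] lemma c1_mk2 (x y : E) : c1 (mk2 x y) = x := rfl
@[simp] lemma c2_mk2 (x y : E) : c2 (mk2 x y) = y := rfl

lemma Sq.ext {u v : Sq E} (h1 : c1 u = c1 v) (h2 : c2 u = c2 v) : u = v :=
  (WithLp.equiv 2 (E × E)).injective (Prod.ext h1 h2)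

variable [NormedAddCommGroup E]

@[simp] lemma c1_add (u v : Sq E) : c1 (u + v) = c1 u + c1 v := rfl
@[simp] lemma c2_add (u v : Sq E) : c2 (u + v) = c2 u + c2 v := rfl
@[simp] lemma c1_sub (u v : Sq E) : c1 (u - v) = c1 u - c1 v := rfl
@[simp] lemma c2_sub (u v : Sq E) : c2 (u - v) = c2 u - c2 v := rfl

lemma Sq.norm_sq_eq (u : Sq E) : ‖u‖ ^ 2 = ‖c1 u‖ ^ 2 + ‖c2 u‖ ^ 2 :=
  WithLp.prod_norm_sq_eq_of_L2 u

variable [InnerProductSpace ℂ E] {E' : Type*} [NormedAddCommGroup E'] [InnerProductSpace ℂ E']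

@[simp] lemma c1_smul (a : ℂ) (u : Sq E) : c1 (a • u) = a • c1 u := rfl
@[simp] lemma c2_smul (a : ℂ) (u : Sq E) : c2 (a • u) = a • c2 u := rfl

lemma inner_sq (u v : Sq E) : ⟪u, v⟫ = ⟪c1 u, c1 v⟫ + ⟪c2 u, c2 v⟫ := rfl

@[simp] lemma c1_pm (A B : E →L[ℂ] E') (u : Sq E) : c1 (pm A B u) = A (c1 u) := rfl
@[simp] lemma c2_pm (A B : E →L[ℂ] E') (u : Sq E) : c2 (pm A B u) = B (c2 u) := rfl
@[simp] lemma swapL_apply (u : Sq E) : swapL E u = mk2 (c2 u) (c1 u) := rfl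
@[simp] lemma Jm_apply (u : Sq E) : Jm E u = mk2 (c2 u) (-c1 u) := rfl

@[simp] lemma swapL_swapL (u : Sq E) : swapL E (swapL E u) = u := rfl

lemma inner_swapL_left (u v : Sq E) : ⟪swapL E u, v⟫ = ⟪u, swapL E v⟫ := by
  simp only [inner_sq, swapL_apply, c1_mk2, c2_mk2]
  ring

lemma inner_Jm_left (f g : Sq E) : ⟪Jm E f, g⟫ = om f g := by
  simp only [inner_sq, Jm_apply, c1_mk2, c2_mk2, inner_neg_left, om]
  ring

lemma inner_calJ_left (f g : Sq (Sq E)) : ⟪calJ E f, g⟫ = Om f g := by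
  rw [calJ, inner_sq, c1_pm, c2_pm, neg_apply, inner_neg_left, inner_Jm_left, inner_Jm_left]
  rfl

lemma inner_swapL_adjoint_left [CompleteSpace E] [CompleteSpace E'] (A : Sq E →L[ℂ] E')
    (z : E') (y : Sq E) :
    ⟪swapL E (ContinuousLinearMap.adjoint A z), y⟫ = ⟪z, A (swapL E y)⟫ := by
  rw [inner_swapL_left, ContinuousLinearMap.adjoint_inner_left]

end Components

section Lagrangian

variable {E : Type*} [NormedAddCommGroup E] [InnerProductSpace ℂ E]

lemma IsLagrangianRange.om_eq_zero {P : Sq E →L[ℂ] Sq E} (hP : IsLagrangianRange P)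
    {f g : Sq E} (hf : f ∈ range P) (hg : g ∈ range P) : om f g = 0 :=
  (hP f).mp hf g hg

variable [CompleteSpace E]

lemma _root_.IsSelfAdjoint.inner_apply_left {T : E →L[ℂ] E} (hT : IsSelfAdjoint T) (a b : E) :
    ⟪T a, b⟫ = ⟪a, T b⟫ :=
  hT.isSymmetric a b

lemma IsOrthProj.apply_of_mem_range {P : E →L[ℂ] E} (hP : IsOrthProj P) {g : E}
    (hg : g ∈ range P) : P g = g := by
  obtain ⟨x, rfl⟩ := hg
  exact congrArg (fun M : E →L[ℂ] E => M x) hP.1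

/-- On `ran P_s × ran P_t`, the form `ω` is represented by `(P_t - P_s) J`: the term in
`P_s` drops out because `ran P_s` is Lagrangian. -/
lemma inner_sub_comp_Jm_left {Pt Ps : Sq E →L[ℂ] Sq E} (hPt : IsOrthProj Pt)
    (hPs : IsSelfAdjoint Ps) (hPsl : IsLagrangianRange Ps) {f g : Sq E} (hf : f ∈ range Ps)
    (hg : g ∈ range Pt) :
    ⟪(Pt - Ps).comp (Jm E) f, g⟫ = om f g := by
  rw [ContinuousLinearMap.comp_apply, sub_apply, inner_sub_left,
    hPt.2.inner_apply_left, hPs.inner_apply_left, hPt.apply_of_mem_range hg, inner_Jm_left,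
    inner_Jm_left, hPsl.om_eq_zero hf ⟨g, rfl⟩, sub_zero]

lemma adjoint_comp_calJ_comp_eq_pm {X Y : Type*} [NormedAddCommGroup X]
    [InnerProductSpace ℂ X] [CompleteSpace X] [NormedAddCommGroup Y] [InnerProductSpace ℂ Y]
    {Pt Ps Qt Qs : Sq E →L[ℂ] Sq E} (hPt : IsOrthProj Pt)
    (hPs : IsSelfAdjoint Ps) (hPsl : IsLagrangianRange Ps) (hQt : IsOrthProj Qt)
    (hQs : IsSelfAdjoint Qs) (hQsl : IsLagrangianRange Qs) {A : X →L[ℂ] Sq (Sq E)}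
    {B : Y →L[ℂ] Sq (Sq E)} (hA : ∀ x, c1 (A x) ∈ range Pt ∧ c2 (A x) ∈ range Qt)
    (hB : ∀ y, c1 (B y) ∈ range Ps ∧ c2 (B y) ∈ range Qs) :
    (ContinuousLinearMap.adjoint A).comp ((calJ E).comp B) =
      (ContinuousLinearMap.adjoint A).comp
        ((pm ((Pt - Ps).comp (Jm E)) (-((Qt - Qs).comp (Jm E)))).comp B) := by
  ext y
  refine ext_inner_right ℂ fun x => ?_
  simp only [ContinuousLinearMap.comp_apply, ContinuousLinearMap.adjoint_inner_left]
  rw [inner_calJ_left, inner_sq, c1_pm, c2_pm, neg_apply, inner_neg_left,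
    inner_sub_comp_Jm_left hPt hPs hPsl (hB y).1 (hA x).1,
    inner_sub_comp_Jm_left hQt hQs hQsl (hB y).2 (hA x).2]
  rfl

end Lagrangian

section Core

variable (C : Core H 𝔥 Hp)

@[simp] lemma c1_Nmax (p : Sq Hp) : c1 (C.Nmax p) = -C.As (c2 p) := rfl
@[simp] lemma c2_Nmax (p : Sq Hp) : c2 (C.Nmax p) = C.As (c1 p) := rfl
@[simp] lemma c1_emb2 (p : Sq Hp) : c1 (C.emb2 p) = C.e (c1 p) := rfl
@[simp] lemma c2_emb2 (p : Sq Hp) : c2 (C.emb2 p) = C.e (c2 p) := rfl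
@[simp] lemma c1_Vop [CompleteSpace H] (F G : H →L[ℂ] H) (u : Sq H) :
    c1 (Vop F G u) = -G (c2 u) := rfl
@[simp] lemma c2_Vop [CompleteSpace H] (F G : H →L[ℂ] H) (u : Sq H) :
    c2 (Vop F G u) = F (c1 u) := rfl

lemma Core.emb2_injective : Injective C.emb2 := fun _ _ h =>
  Sq.ext (C.e_inj (congrArg c1 h)) (C.e_inj (congrArg c2 h))

lemma Core.norm_le_norm_emb2_add_norm_Nmax (q : Sq Hp) :
    ‖q‖ ≤ ‖C.emb2 q‖ + ‖C.Nmax q‖ := by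
  have graph_norm : ∀ u : Hp, ‖u‖ ^ 2 = ‖C.e u‖ ^ 2 + ‖C.As u‖ ^ 2 := fun u => by
    have h := C.graph_inner u u
    rw [inner_self_eq_norm_sq_to_K, inner_self_eq_norm_sq_to_K,
      inner_self_eq_norm_sq_to_K] at h
    exact_mod_cast h
  have hq : ‖q‖ ^ 2 = ‖C.emb2 q‖ ^ 2 + ‖C.Nmax q‖ ^ 2 := by
    rw [Sq.norm_sq_eq, Sq.norm_sq_eq, Sq.norm_sq_eq, graph_norm, graph_norm]
    simp only [c1_Nmax, c2_Nmax, c1_emb2, c2_emb2, norm_neg]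
    ring
  nlinarith [norm_nonneg q, norm_nonneg (C.emb2 q), norm_nonneg (C.Nmax q)]

def Core.boundaryForm (u v : Hp) : ℂ := ⟪C.As u, C.e v⟫ - ⟪C.e u, C.As v⟫

lemma IsSAExt.boundaryForm_eq_zero {C : Core H 𝔥 Hp} {dom : Submodule ℂ Hp}
    (hdom : IsSAExt C dom) {u v : Hp} (hu : u ∈ dom) (hv : v ∈ dom) :
    C.boundaryForm u v = 0 :=
  sub_eq_zero.mpr ((hdom.sa _ _).mp ⟨v, hv, rfl, rfl⟩ u hu)

lemma IsSAExt.exists_of_inner_eq {C : Core H 𝔥 Hp} {dom : Submodule ℂ Hp}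
    (hdom : IsSAExt C dom) {v w : H} (h : ∀ u ∈ dom, ⟪v, C.As u⟫ = ⟪w, C.e u⟫) :
    ∃ p ∈ dom, C.e p = v ∧ C.As p = w :=
  (hdom.sa v w).mpr fun u hu => by rw [← inner_conj_symm, h u hu, inner_conj_symm]

/-- `𝒩 + V - ζ` acting on `H₊²`. -/
def Core.shiftedOp (V : Sq H →L[ℂ] Sq H) (ζ : ℂ) : Sq Hp →L[ℂ] Sq H :=
  C.Nmax + V.comp C.emb2 - ζ • C.emb2

lemma Core.shiftedOp_sub_shiftedOp (V V' : Sq H →L[ℂ] Sq H) (ζ : ℂ) (p : Sq Hp) :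
    C.shiftedOp V ζ p - C.shiftedOp V' ζ p = V (C.emb2 p) - V' (C.emb2 p) := by
  simp only [Core.shiftedOp, sub_apply, add_apply, ContinuousLinearMap.comp_apply]
  abel

variable [CompleteSpace H]

lemma ResSol.shiftedOp_eq {C : Core H 𝔥 Hp} {dU dV : Submodule ℂ Hp} {V : Sq H →L[ℂ] Sq H}
    {ζ : ℂ} {p : Sq Hp} {x : Sq H} (h : ResSol C dU dV V ζ p x) : C.shiftedOp V ζ p = x :=
  h.2.2

/-- Green's identity for `𝒩 + V - ζ`; the potential drops out because `F` and `G` are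
self-adjoint. -/
lemma Core.inner_shiftedOp_sub_inner {F G : H →L[ℂ] H} (hF : IsSelfAdjoint F)
    (hG : IsSelfAdjoint G) (ζ : ℂ) (p q : Sq Hp) :
    ⟪C.shiftedOp (Vop F G) ζ p, C.emb2 (swapL Hp q)⟫
        - ⟪C.emb2 p, swapL H (C.shiftedOp (Vop F G) (starRingEnd ℂ ζ) q)⟫ =
      C.boundaryForm (c1 p) (c1 q) - C.boundaryForm (c2 p) (c2 q) := by
  simp only [Core.shiftedOp, Core.boundaryForm, sub_apply, add_apply,
    ContinuousLinearMap.comp_apply, smul_apply, inner_sq, c1_add, c2_add, c1_sub, c2_sub,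
    c1_smul, c2_smul, c1_Nmax, c2_Nmax, c1_emb2, c2_emb2, c1_Vop, c2_Vop, swapL_apply,
    c1_mk2, c2_mk2, inner_add_left, inner_sub_left, inner_neg_left, inner_smul_left,
    inner_add_right, inner_sub_right, inner_neg_right, inner_smul_right,
    hF.inner_apply_left, hG.inner_apply_left]
  ring

lemma Core.inner_shiftedOp_sub_inner_eq_Om {tr : Hp →L[ℂ] Sq 𝔥} (htr : IsTrace C tr)
    {F G : H →L[ℂ] H} (hF : IsSelfAdjoint F) (hG : IsSelfAdjoint G) (ζ : ℂ) (p q : Sq Hp) :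
    ⟪C.shiftedOp (Vop F G) ζ p, C.emb2 (swapL Hp q)⟫
        - ⟪C.emb2 p, swapL H (C.shiftedOp (Vop F G) (starRingEnd ℂ ζ) q)⟫ =
      Om (Top tr p) (Top tr q) := by
  rw [C.inner_shiftedOp_sub_inner hF hG, Core.boundaryForm, Core.boundaryForm, htr.green,
    htr.green]
  rfl

end Core

section Resolvent

variable [CompleteSpace H] {C : Core H 𝔥 Hp} {dU dV : Submodule ℂ Hp} {F G : H →L[ℂ] H}
  {ζ : ℂ}

lemma ResSol.add {V : Sq H →L[ℂ] Sq H} {p p' : Sq Hp} {x x' : Sq H}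
    (h : ResSol C dU dV V ζ p x) (h' : ResSol C dU dV V ζ p' x') :
    ResSol C dU dV V ζ (p + p') (x + x') :=
  ⟨dU.add_mem h.1 h'.1, dV.add_mem h.2.1 h'.2.1, by
    show C.shiftedOp V ζ (p + p') = x + x'
    rw [map_add, h.shiftedOp_eq, h'.shiftedOp_eq]⟩

lemma ResSol.smul {V : Sq H →L[ℂ] Sq H} {p : Sq Hp} {x : Sq H} (a : ℂ)
    (h : ResSol C dU dV V ζ p x) : ResSol C dU dV V ζ (a • p) (a • x) :=
  ⟨dU.smul_mem a h.1, dV.smul_mem a h.2.1, by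
    show C.shiftedOp V ζ (a • p) = a • x
    rw [map_smul, h.shiftedOp_eq]⟩

/-- Green's identity with vanishing boundary terms: the problems at `ζ` and `conj ζ` are
adjoint to each other through `τ`. -/
lemma ResSol.inner_emb2_swapL (hU : IsSAExt C dU) (hV : IsSAExt C dV)
    (hF : IsSelfAdjoint F) (hG : IsSelfAdjoint G) {p q : Sq Hp} {x w : Sq H}
    (hp : ResSol C dU dV (Vop F G) ζ p x)
    (hq : ResSol C dU dV (Vop F G) (starRingEnd ℂ ζ) q w) :
    ⟪C.emb2 p, swapL H w⟫ = ⟪x, C.emb2 (swapL Hp q)⟫ := by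
  have h := C.inner_shiftedOp_sub_inner hF hG ζ p q
  rw [hp.shiftedOp_eq, hq.shiftedOp_eq, hU.boundaryForm_eq_zero hp.1 hq.1,
    hV.boundaryForm_eq_zero hp.2.1 hq.2.1, sub_zero] at h
  exact (sub_eq_zero.mp h).symm

lemma IsResS.emb2_eq_of_resSol_conj (hU : IsSAExt C dU) (hV : IsSAExt C dV)
    (hF : IsSelfAdjoint F) (hG : IsSelfAdjoint G) {R : Sq H →L[ℂ] Sq Hp}
    (hR : IsResS C dU dV (Vop F G) ζ R) {q : Sq Hp} {w : Sq H}
    (hq : ResSol C dU dV (Vop F G) (starRingEnd ℂ ζ) q w) :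
    C.emb2 q = swapL H (ContinuousLinearMap.adjoint (C.emb2.comp R) (swapL H w)) :=
  ext_inner_left ℂ fun x => by
    rw [← inner_swapL_left, ContinuousLinearMap.adjoint_inner_right,
      ContinuousLinearMap.comp_apply, (hR.1 _).inner_emb2_swapL hU hV hF hG hq,
      inner_swapL_left]
    rfl

/-- The solution `q` at `conj ζ` has `emb2 q = τ R(ζ)* τ y`; that its components lie in
`dom 𝒜` and `dom ℬ` is the self-adjointness of the two extensions. -/
lemma IsResS.exists_resSol_conj (hU : IsSAExt C dU) (hV : IsSAExt C dV)
    (hF : IsSelfAdjoint F) (hG : IsSelfAdjoint G) {R : Sq H →L[ℂ] Sq Hp}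
    (hR : IsResS C dU dV (Vop F G) ζ R) (y : Sq H) :
    ∃ q, ResSol C dU dV (Vop F G) (starRingEnd ℂ ζ) q y := by
  set z := ContinuousLinearMap.adjoint (C.emb2.comp R) (swapL H y)
  have hz : ∀ p : Sq Hp, c1 p ∈ dU → c2 p ∈ dV →
      ⟪z, C.shiftedOp (Vop F G) ζ p⟫ = ⟪swapL H y, C.emb2 p⟫ := fun p h1 h2 => by
    rw [ContinuousLinearMap.adjoint_inner_left, ContinuousLinearMap.comp_apply,
      hR.2 p (C.shiftedOp (Vop F G) ζ p) ⟨h1, h2, rfl⟩]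
  obtain ⟨q1, hq1, hq1e, hq1A⟩ : ∃ q1 ∈ dU, C.e q1 = c2 z ∧
      C.As q1 = c2 y - F (c2 z) + starRingEnd ℂ ζ • c1 z := by
    refine hU.exists_of_inner_eq fun u hu => ?_
    have h := hz (mk2 u 0) hu dV.zero_mem
    simp only [Core.shiftedOp, sub_apply, add_apply, ContinuousLinearMap.comp_apply,
      smul_apply, inner_sq, c1_Nmax, c2_Nmax, c1_emb2, c2_emb2, c1_Vop, c2_Vop, c1_mk2,
      c2_mk2, swapL_apply, map_zero, neg_zero, inner_zero_right, inner_add_right,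
      inner_sub_right, inner_smul_right, ← hF.inner_apply_left] at h
    simp only [inner_add_left, inner_sub_left, inner_smul_left, Complex.conj_conj]
    linear_combination h
  obtain ⟨q2, hq2, hq2e, hq2A⟩ : ∃ q2 ∈ dV, C.e q2 = c1 z ∧
      C.As q2 = -c1 y - G (c1 z) - starRingEnd ℂ ζ • c2 z := by
    refine hV.exists_of_inner_eq fun u hu => ?_
    have h := hz (mk2 0 u) dU.zero_mem hu
    simp only [Core.shiftedOp, sub_apply, add_apply, ContinuousLinearMap.comp_apply,
      smul_apply, inner_sq, c1_Nmax, c2_Nmax, c1_emb2, c2_emb2, c1_Vop, c2_Vop, c1_mk2,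
      c2_mk2, swapL_apply, map_zero, inner_zero_right, inner_add_right, inner_sub_right,
      inner_neg_right, inner_smul_right, ← hG.inner_apply_left] at h
    simp only [inner_neg_left, inner_sub_left, inner_smul_left, Complex.conj_conj]
    linear_combination -h
  refine ⟨mk2 q1 q2, hq1, hq2, Sq.ext ?_ ?_⟩ <;>
    simp only [c1_sub, c2_sub, c1_add, c2_add, c1_smul, c2_smul, c1_Nmax, c2_Nmax, c1_emb2,
      c2_emb2, c1_Vop, c2_Vop, c1_mk2, c2_mk2, hq1e, hq2e, hq1A, hq2A] <;>
    abel

lemma IsResS.exists_isResS_conj (hU : IsSAExt C dU) (hV : IsSAExt C dV)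
    (hF : IsSelfAdjoint F) (hG : IsSelfAdjoint G) {R : Sq H →L[ℂ] Sq Hp}
    (hR : IsResS C dU dV (Vop F G) ζ R) :
    ∃ Rc, IsResS C dU dV (Vop F G) (starRingEnd ℂ ζ) Rc := by
  choose sol hsol using hR.exists_resSol_conj hU hV hF hG
  set M : Sq H →L[ℂ] Sq H :=
    (swapL H).comp ((ContinuousLinearMap.adjoint (C.emb2.comp R)).comp (swapL H))
  have hM : ∀ {q w}, ResSol C dU dV (Vop F G) (starRingEnd ℂ ζ) q w → C.emb2 q = M w :=
    fun hq => hR.emb2_eq_of_resSol_conj hU hV hF hG hq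
  have huniq : ∀ {q q' w}, ResSol C dU dV (Vop F G) (starRingEnd ℂ ζ) q w →
      ResSol C dU dV (Vop F G) (starRingEnd ℂ ζ) q' w → q = q' :=
    fun hq hq' => C.emb2_injective ((hM hq).trans (hM hq').symm)
  set N : Sq H →L[ℂ] Sq H :=
    ContinuousLinearMap.id ℂ (Sq H) - (Vop F G).comp M + starRingEnd ℂ ζ • M
  have hN : ∀ {q w}, ResSol C dU dV (Vop F G) (starRingEnd ℂ ζ) q w → C.Nmax q = N w :=
    fun {q w} hq => by
      have h : C.Nmax q + Vop F G (C.emb2 q) - starRingEnd ℂ ζ • C.emb2 q = w := hq.2.2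
      calc C.Nmax q = w - Vop F G (C.emb2 q) + starRingEnd ℂ ζ • C.emb2 q := by
            rw [← h]; abel
        _ = N w := by rw [hM hq]; rfl
  let L : Sq H →ₗ[ℂ] Sq Hp :=
    { toFun := sol
      map_add' := fun a b => huniq (hsol (a + b)) ((hsol a).add (hsol b))
      map_smul' := fun c a => huniq (hsol (c • a)) ((hsol a).smul c) }
  refine ⟨L.mkContinuous (‖M‖ + ‖N‖) fun y => ?_, hsol, fun p x hp => huniq (hsol x) hp⟩
  calc ‖sol y‖ ≤ ‖C.emb2 (sol y)‖ + ‖C.Nmax (sol y)‖ := C.norm_le_norm_emb2_add_norm_Nmax _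
    _ = ‖M y‖ + ‖N y‖ := by rw [hM (hsol y), hN (hsol y)]
    _ ≤ (‖M‖ + ‖N‖) * ‖y‖ := by
      rw [add_mul]
      exact add_le_add (M.le_opNorm y) (N.le_opNorm y)

lemma IsResS.mem_range_Top {tr : Hp →L[ℂ] Sq 𝔥} {P Q : Sq 𝔥 →L[ℂ] Sq 𝔥}
    (hP : tr '' (dU : Set Hp) = range P) (hQ : tr '' (dV : Set Hp) = range Q)
    {V : Sq H →L[ℂ] Sq H} {R : Sq H →L[ℂ] Sq Hp} (hR : IsResS C dU dV V ζ R) (x : Sq H) :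
    c1 (Top tr (R x)) ∈ range P ∧ c2 (Top tr (R x)) ∈ range Q :=
  ⟨hP ▸ mem_image_of_mem tr (hR.1 x).1, hQ ▸ mem_image_of_mem tr (hR.1 x).2.1⟩

theorem resolvent_sub_eq [CompleteSpace 𝔥] {tr : Hp →L[ℂ] Sq 𝔥} (htr : IsTrace C tr)
    (hU : IsSAExt C dU) (hV : IsSAExt C dV) (hF : IsSelfAdjoint F) (hG : IsSelfAdjoint G)
    {dU' dV' : Submodule ℂ Hp} {F' G' : H →L[ℂ] H} {Rt Rtc Rs : Sq H →L[ℂ] Sq Hp}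
    (hRt : IsResS C dU dV (Vop F G) ζ Rt)
    (hRtc : IsResS C dU dV (Vop F G) (starRingEnd ℂ ζ) Rtc)
    (hRs : IsResS C dU' dV' (Vop F' G') ζ Rs) :
    C.emb2.comp Rt - C.emb2.comp Rs =
      ((C.emb2.comp Rt).comp (Vop F' G' - Vop F G)).comp (C.emb2.comp Rs)
        + ((swapL H).comp (ContinuousLinearMap.adjoint ((Top tr).comp Rtc))).comp
            ((calJ 𝔥).comp ((Top tr).comp Rs)) := by
  refine ContinuousLinearMap.ext fun x => ext_inner_right ℂ fun y => ?_
  have hq := hRtc.1 (swapL H y)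
  have star_x := (hRt.1 x).inner_emb2_swapL hU hV hF hG hq
  have star_V := (hRt.1 (Vop F' G' (C.emb2 (Rs x)) - Vop F G (C.emb2 (Rs x)))).inner_emb2_swapL
    hU hV hF hG hq
  have green := C.inner_shiftedOp_sub_inner_eq_Om htr hF hG ζ (Rs x) (Rtc (swapL H y))
  have hshift : C.shiftedOp (Vop F G) ζ (Rs x) =
      x - (Vop F' G' (C.emb2 (Rs x)) - Vop F G (C.emb2 (Rs x))) := by
    rw [← C.shiftedOp_sub_shiftedOp (Vop F' G') (Vop F G) ζ, (hRs.1 x).shiftedOp_eq]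
    abel
  rw [hq.shiftedOp_eq, swapL_swapL, hshift, inner_sub_left] at green
  rw [swapL_swapL] at star_x star_V
  simp only [sub_apply, add_apply, ContinuousLinearMap.comp_apply, inner_sub_left,
    inner_add_left, inner_swapL_adjoint_left, inner_calJ_left]
  linear_combination star_x - star_V + green

end Resolvent

end CSO

namespace CSO

/-- Lemma 3.2: resolvent difference formulas for the one-parameter
family `𝒩_t + V_t`. -/
theorem statement2
    {H 𝔥 Hp : Type*}
    [NormedAddCommGroup H] [InnerProductSpace ℂ H] [CompleteSpace H]
    [NormedAddCommGroup 𝔥] [InnerProductSpace ℂ 𝔥] [FiniteDimensional ℂ 𝔥]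
    [NormedAddCommGroup Hp] [InnerProductSpace ℂ Hp] [CompleteSpace Hp]
    (C : Core H 𝔥 Hp)
    (tr : ℝ → Hp →L[ℂ] Sq 𝔥) (P Q : ℝ → Sq 𝔥 →L[ℂ] Sq 𝔥)
    (dU dV : ℝ → Submodule ℂ Hp) (F G : ℝ → H →L[ℂ] H)
    (hfam : IsFamily C tr P Q dU dV F G)
    (t s r : ℝ) (ht : t ∈ Icc (0:ℝ) 1) (hs : s ∈ Icc (0:ℝ) 1) (hr : r ∈ Icc (0:ℝ) 1)
    (ζ : ℂ) (Rt Rs : Sq H →L[ℂ] Sq Hp)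
    (hRt : IsResS C (dU t) (dV t) (Vop (F t) (G t)) ζ Rt)
    (hRs : IsResS C (dU s) (dV s) (Vop (F s) (G s)) ζ Rs) :
    ∃ Rtc, IsResS C (dU t) (dV t) (Vop (F t) (G t)) ((starRingEnd ℂ) ζ) Rtc ∧
      -- first formula, with the trace operator `T_r`
      C.emb2.comp Rt - C.emb2.comp Rs =
        ((C.emb2.comp Rt).comp (Vop (F s) (G s) - Vop (F t) (G t))).comp
            (C.emb2.comp Rs)
          + ((swapL H).comp
              (ContinuousLinearMap.adjoint ((Top (tr r)).comp Rtc))).comp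
              ((calJ 𝔥).comp ((Top (tr r)).comp Rs)) ∧
      -- second formula
      C.emb2.comp Rt - C.emb2.comp Rs =
        ((C.emb2.comp Rt).comp (Vop (F s) (G s) - Vop (F t) (G t))).comp
            (C.emb2.comp Rs)
          + ((swapL H).comp
              (ContinuousLinearMap.adjoint ((Top (tr t)).comp Rtc))).comp
              ((pm ((P t - P s).comp (Jm 𝔥)) (-((Q t - Q s).comp (Jm 𝔥)))).comp
                ((Top (tr s)).comp Rs))
          + ((swapL H).comp
              (ContinuousLinearMap.adjoint ((Top (tr t)).comp Rtc))).comp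
              ((calJ 𝔥).comp ((Top (tr t) - Top (tr s)).comp Rs)) := by
  obtain ⟨Rtc, hRtc⟩ :=
    hRt.exists_isResS_conj (hfam.hU t ht) (hfam.hV t ht) (hfam.hF t ht) (hfam.hG t ht)
  have hdiff := fun r (hr : r ∈ Icc (0:ℝ) 1) => resolvent_sub_eq (hfam.htr r hr)
    (hfam.hU t ht) (hfam.hV t ht) (hfam.hF t ht) (hfam.hG t ht) hRt hRtc hRs
  have hpm := adjoint_comp_calJ_comp_eq_pm (A := (Top (tr t)).comp Rtc)
    (B := (Top (tr s)).comp Rs) (hfam.hP t ht).1 (hfam.hP s hs).1.2 (hfam.hP s hs).2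
    (hfam.hQ t ht).1 (hfam.hQ s hs).1.2 (hfam.hQ s hs).2
    (hRtc.mem_range_Top (hfam.htrU t ht) (hfam.htrV t ht))
    (hRs.mem_range_Top (hfam.htrU s hs) (hfam.htrV s hs))
  refine ⟨Rtc, hRtc, hdiff r hr, ?_⟩
  rw [hdiff t ht]
  simp only [ContinuousLinearMap.sub_comp, ContinuousLinearMap.comp_sub,
    ContinuousLinearMap.comp_assoc, hpm]
  abel

end CSO
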